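/- For all x, y ∈ A, the left multiplication ad(x,y) : A → A, z ↦ [x, y, z], is simultaneously a derivation of the associative product (ad(x,y)(a·b) = ad(x,y)(a)·b + a·ad(x,y)(b) for all a, b ∈ A) and a derivation of the 3-bracket (ad(x,y)([a,b,c]) = [ad(x,y)(a), b, c] + [a, ad(x,y)(b), c] + [a, b, ad(x,y)(c)] for all a, b, c ∈ A). Hence left multiplications are derivations of the 3-Lie Poisson algebra A. -/

import Mathlib

/-!
Every identity in question is additive in each of its arguments, so it suffices to check it on
basis elements. There `[L_ξ, L_η, ·]` multiplies `L_α` by `M(ξ, η, α)` and shifts its index by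
`ξ + η - ν`. Since the shift is additive and `M(ξ, η, ·)` is linear, this is a derivation of the
group-algebra product; for the bracket, the claim reduces to a polynomial identity between
products of two determinants.
-/

noncomputable section

/-- The half-integers `½ℤ = {k/2 : k ∈ ℤ}` as an additive subgroup of `ℚ`. -/
def HalfInt : AddSubgroup ℚ where
  carrier := {q | ∃ k : ℤ, q = k / 2}
  add_mem' := by rintro a b ⟨k, rfl⟩ ⟨j, rfl⟩; exact ⟨k + j, by push_cast; ring⟩
  zero_mem' := ⟨0, by norm_num⟩
  neg_mem' := by rintro a ⟨k, rfl⟩; exact ⟨-k, by push_cast; ring⟩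

/-- The half-integer `k/2`. -/
def hh (k : ℤ) : HalfInt := ⟨(k : ℚ) / 2, ⟨k, rfl⟩⟩

variable (F : Type*) [Field F] [CharZero F]

/-- `A` is the group algebra of `(½ℤ)³` over `F`; the basis element indexed by
`(l, m, r)` is `L_{l,m}^r`. -/
abbrev A := AddMonoidAlgebra F (HalfInt × HalfInt × HalfInt)

/-- The basis element `L_{l,m}^r` of `A`. -/
def L (l m r : HalfInt) : A F := AddMonoidAlgebra.single (l, m, r) 1

/-- `M(α₁,α₂,α₃)`: the determinant of the 3×3 matrix with rows `(r₁,r₂,r₃)`,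
`(l₁,l₂,l₃)`, `(m₁,m₂,m₃)`, computed in `ℚ` and mapped into `F`.
Here an index `α = (l, m, r)`. -/
def Mdet (α β γ : HalfInt × HalfInt × HalfInt) : F :=
  ((Matrix.det !![(α.2.2 : ℚ), (β.2.2 : ℚ), (γ.2.2 : ℚ);
                  (α.1 : ℚ),   (β.1 : ℚ),   (γ.1 : ℚ);
                  (α.2.1 : ℚ), (β.2.1 : ℚ), (γ.2.1 : ℚ)] : ℚ) : F)

/-- The shift `ν = (1, 1, 0)` (in coordinates `(l, m, r)`). -/
def nu : HalfInt × HalfInt × HalfInt := (hh 2, hh 2, hh 0)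

/-- The alternating trilinear bracket on `A`, determined on basis elements by
`[L_{l₁,m₁}^{r₁}, L_{l₂,m₂}^{r₂}, L_{l₃,m₃}^{r₃}]
  = M(α₁,α₂,α₃) · L_{l₁+l₂+l₃-1, m₁+m₂+m₃-1}^{r₁+r₂+r₃}`. -/
def bracket (x y z : A F) : A F :=
  Finsupp.sum x.coeff fun α a => Finsupp.sum y.coeff fun β b => Finsupp.sum z.coeff fun γ c =>
    AddMonoidAlgebra.single (α + β + γ - nu) (a * b * c * Mdet F α β γ)

local notation "Γ" => HalfInt × HalfInt × HalfInt

section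

variable {K : Type*} [Field K]

theorem Mdet_eq (α β γ : Γ) :
    Mdet K α β γ = (((α.2.2 : ℚ) * β.1 * γ.2.1 - α.2.2 * β.2.1 * γ.1
      - β.2.2 * α.1 * γ.2.1 + β.2.2 * α.2.1 * γ.1
      + γ.2.2 * α.1 * β.2.1 - γ.2.2 * α.2.1 * β.1 : ℚ) : K) := by
  rw [Mdet, Matrix.det_fin_three]
  congr 1
  simp
  ring

theorem Mdet_add_right [CharZero K] (α β γ δ : Γ) :
    Mdet K α β (γ + δ) = Mdet K α β γ + Mdet K α β δ := by
  simp only [Mdet_eq, Prod.fst_add, Prod.snd_add, AddSubgroup.coe_add]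
  push_cast
  ring

/-- The fundamental identity of the bracket, read off on basis elements. -/
theorem Mdet_mul_Mdet_sub_nu [CharZero K] (ξ η α β γ : Γ) :
    Mdet K α β γ * Mdet K ξ η (α + β + γ - nu)
      = Mdet K ξ η α * Mdet K (ξ + η + α - nu) β γ
        + Mdet K ξ η β * Mdet K α (ξ + η + β - nu) γ
        + Mdet K ξ η γ * Mdet K α β (ξ + η + γ - nu) := by
  have h1 : ((hh 2 : HalfInt) : ℚ) = 1 := by norm_num [hh]
  have h0 : ((hh 0 : HalfInt) : ℚ) = 0 := by norm_num [hh]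
  simp only [Mdet_eq, nu, Prod.fst_add, Prod.snd_add, Prod.fst_sub, Prod.snd_sub,
    AddSubgroup.coe_add, AddSubgroup.coe_sub, h1, h0]
  push_cast
  ring

open AddMonoidAlgebra

theorem bracket_single (α β γ : Γ) (a b c : K) :
    bracket K (single α a) (single β b) (single γ c)
      = single (α + β + γ - nu) (a * b * c * Mdet K α β γ) := by
  simp [bracket, coeff_single]

@[simp]
theorem bracket_zero_left (y z : A K) : bracket K 0 y z = 0 := by
  simp [bracket]

@[simp]
theorem bracket_zero_middle (x z : A K) : bracket K x 0 z = 0 := by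
  simp [bracket]

@[simp]
theorem bracket_zero_right (x y : A K) : bracket K x y 0 = 0 := by
  simp [bracket]

theorem bracket_add_left (x x' y z : A K) :
    bracket K (x + x') y z = bracket K x y z + bracket K x' y z := by
  unfold bracket
  rw [coeff_add, Finsupp.sum_add_index'] <;>
    simp [add_mul, Finsupp.sum_add]

theorem bracket_add_middle (x y y' z : A K) :
    bracket K x (y + y') z = bracket K x y z + bracket K x y' z := by
  unfold bracket
  rw [← Finsupp.sum_add]
  refine Finsupp.sum_congr fun α _ => ?_
  rw [coeff_add, Finsupp.sum_add_index'] <;>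
    simp [mul_add, add_mul, Finsupp.sum_add]

theorem bracket_add_right (x y z z' : A K) :
    bracket K x y (z + z') = bracket K x y z + bracket K x y z' := by
  unfold bracket
  rw [← Finsupp.sum_add]
  refine Finsupp.sum_congr fun α _ => ?_
  rw [← Finsupp.sum_add]
  refine Finsupp.sum_congr fun β _ => ?_
  rw [coeff_add, Finsupp.sum_add_index'] <;>
    simp [mul_add, add_mul]

theorem bracket_mul [CharZero K] (x y a b : A K) :
    bracket K x y (a * b) = bracket K x y a * b + a * bracket K x y b := by
  induction x using induction_linear with
  | zero => simp
  | add p q hp hq => simp only [bracket_add_left, hp, hq]; ring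
  | single ξ u =>
  induction y using induction_linear with
  | zero => simp
  | add p q hp hq => simp only [bracket_add_middle, hp, hq]; ring
  | single η v =>
  induction a using induction_linear with
  | zero => simp
  | add p q hp hq => simp only [add_mul, bracket_add_right, hp, hq]; ring
  | single α a =>
  induction b using induction_linear with
  | zero => simp
  | add p q hp hq => simp only [mul_add, bracket_add_right, hp, hq]; ring
  | single β b =>
    have hα : ξ + η + α - nu + β = ξ + η + (α + β) - nu := by abel
    have hβ : α + (ξ + η + β - nu) = ξ + η + (α + β) - nu := by abel
    simp only [single_mul_single, bracket_single, Mdet_add_right, hα, hβ, ← single_add]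
    congr 1
    ring

theorem bracket_bracket [CharZero K] (x y a b c : A K) :
    bracket K x y (bracket K a b c)
      = bracket K (bracket K x y a) b c + bracket K a (bracket K x y b) c
        + bracket K a b (bracket K x y c) := by
  induction x using induction_linear with
  | zero => simp
  | add p q hp hq =>
    simp only [bracket_add_left, bracket_add_middle, bracket_add_right, hp, hq]; abel
  | single ξ u =>
  induction y using induction_linear with
  | zero => simp
  | add p q hp hq =>
    simp only [bracket_add_left, bracket_add_middle, bracket_add_right, hp, hq]; abel
  | single η v =>
  induction a using induction_linear with
  | zero => simp
  | add p q hp hq => simp only [bracket_add_left, bracket_add_right, hp, hq]; abel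
  | single α a =>
  induction b using induction_linear with
  | zero => simp
  | add p q hp hq => simp only [bracket_add_middle, bracket_add_right, hp, hq]; abel
  | single β b =>
  induction c using induction_linear with
  | zero => simp
  | add p q hp hq => simp only [bracket_add_right, hp, hq]; abel
  | single γ c =>
    have hα : ξ + η + α - nu + β + γ - nu = ξ + η + (α + β + γ - nu) - nu := by abel
    have hβ : α + (ξ + η + β - nu) + γ - nu = ξ + η + (α + β + γ - nu) - nu := by abel
    have hγ : α + β + (ξ + η + γ - nu) - nu = ξ + η + (α + β + γ - nu) - nu := by abel
    simp only [bracket_single, hα, hβ, hγ, ← single_add]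
    congr 1
    linear_combination (u * v * a * b * c) * Mdet_mul_Mdet_sub_nu (K := K) ξ η α β γ

end

/-- for all `x, y ∈ A`, the left multiplication
`ad(x,y) : z ↦ [x, y, z]` is a derivation both of the associative product and of
the 3-bracket; hence left multiplications are derivations of the 3-Lie Poisson
algebra `A`. -/
theorem ad_is_derivation (x y : A F) :
    (∀ a b : A F,
        bracket F x y (a * b) = bracket F x y a * b + a * bracket F x y b)
      ∧ (∀ a b c : A F,
          bracket F x y (bracket F a b c)
            = bracket F (bracket F x y a) b c + bracket F a (bracket F x y b) c
              + bracket F a b (bracket F x y c)) :=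
  ⟨bracket_mul x y, bracket_bracket x y⟩
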